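/- arXiv:2309.01264 — 4 statements merged into one kernel-verified Lean document; each statement's English description precedes it below -/
import Mathlib

section
/- Let G be a directed multigraph with capacity function c, source s and sink t, and suppose that (1) every vertex v other than s,t satisfies d⁺(v) = d⁻(v) (total capacity of outgoing arcs equals total capacity of incoming arcs), (2) s has no incoming arcs, (3) t has no outgoing arcs, and (4) F = d⁺(s)/2 = d⁻(t)/2. Then G admits an all-or-nothing st-flow of value F if and only if the underlying undirected multigraph G' (with the same capacities) admits a circulating orientation, i.e., an orientation in which at every vertex the total capacity of edges oriented inwards equals the total capacity of edges oriented outwards. -/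
open Finset

/-- Total capacity of arcs `e` with `h e = v` and orientation bit `σ e = b`. -/
def capS {V E : Type} [Fintype E] [DecidableEq V] (h : E → V) (c : E → ℕ)
    (σ : E → Bool) (b : Bool) (v : V) : ℕ :=
  ∑ e, if h e = v ∧ σ e = b then c e else 0

lemma capS_split {V E : Type} [Fintype E] [DecidableEq V] (h : E → V) (c : E → ℕ)
    (σ : E → Bool) (v : V) :
    ∑ e ∈ univ.filter (fun e => h e = v), c e =
      capS h c σ true v + capS h c σ false v := by
  rw [Finset.sum_filter]
  unfold capS
  rw [← Finset.sum_add_distrib]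
  refine Finset.sum_congr rfl fun e _ => ?_
  by_cases h1 : h e = v <;> cases hσ : σ e <;> simp [h1, hσ]

lemma capS_cond {V E : Type} [Fintype E] [DecidableEq V] (h₁ h₂ : E → V) (c : E → ℕ)
    (σ : E → Bool) (v : V) :
    ∑ e ∈ univ.filter (fun e => (cond (σ e) (h₁ e) (h₂ e)) = v), c e =
      capS h₁ c σ true v + capS h₂ c σ false v := by
  rw [Finset.sum_filter]
  unfold capS
  rw [← Finset.sum_add_distrib]
  refine Finset.sum_congr rfl fun e _ => ?_
  cases hσ : σ e <;> by_cases h1 : h₁ e = v <;> by_cases h2 : h₂ e = v <;>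
    simp [h1, h2, hσ]

lemma capS_glob {V E : Type} [Fintype V] [Fintype E] [DecidableEq V] (h : E → V)
    (c : E → ℕ) (σ : E → Bool) (b : Bool) :
    ∑ v, capS h c σ b v = ∑ e, if σ e = b then c e else 0 := by
  unfold capS
  rw [Finset.sum_comm]
  refine Finset.sum_congr rfl fun e _ => ?_
  by_cases hσ : σ e = b
  · simp [hσ, Finset.sum_ite_eq]
  · simp [hσ]

lemma capS_flow {V E : Type} [Fintype E] [DecidableEq V] (h : E → V) (c : E → ℕ)
    (σ : E → Bool) (f : E → ℕ) (hfc : ∀ e, (if σ e = true then c e else 0) = f e)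
    (v : V) :
    ∑ e ∈ univ.filter (fun e => h e = v), f e = capS h c σ true v := by
  rw [Finset.sum_filter]
  unfold capS
  refine Finset.sum_congr rfl fun e _ => ?_
  have hh := hfc e
  by_cases h1 : h e = v <;> cases hσ : σ e <;> simp [h1, hσ] at hh ⊢ <;> omega

/-- For a flow network whose internal vertices are balanced
(`d⁺(v) = d⁻(v)`), whose source has no incoming arcs, whose sink has no outgoing
arcs, and with `F = d⁺(s)/2 = d⁻(t)/2`, an all-or-nothing `st`-flow of value `F`
exists iff the underlying undirected multigraph has a circulating orientation.
Arcs are indexed by `E` with endpoint maps `src`, `tgt` and capacities `c`.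
An orientation `σ : E → Bool` keeps arc `e` in its original direction when
`σ e = true` and reverses it otherwise. -/
theorem stmt0 {V E : Type} [Fintype V] [Fintype E] [DecidableEq V]
    (src tgt : E → V) (c : E → ℕ) (s t : V) (hst : s ≠ t) (F : ℕ)
    (hbal : ∀ v : V, v ≠ s → v ≠ t →
      ∑ e ∈ univ.filter (fun e => src e = v), c e =
      ∑ e ∈ univ.filter (fun e => tgt e = v), c e)
    (hs_no_in : ∀ e, tgt e ≠ s) (ht_no_out : ∀ e, src e ≠ t)
    (hFs : 2 * F = ∑ e ∈ univ.filter (fun e => src e = s), c e)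
    (hFt : 2 * F = ∑ e ∈ univ.filter (fun e => tgt e = t), c e) :
    (∃ f : E → ℕ,
      (∀ e, f e = 0 ∨ f e = c e) ∧
      (∀ v : V, v ≠ s → v ≠ t →
        ∑ e ∈ univ.filter (fun e => tgt e = v), f e =
        ∑ e ∈ univ.filter (fun e => src e = v), f e) ∧
      (∑ e ∈ univ.filter (fun e => src e = s), (f e : ℤ)) -
        (∑ e ∈ univ.filter (fun e => tgt e = s), (f e : ℤ)) = (F : ℤ)) ↔
    (∃ σ : E → Bool, ∀ v : V,
      ∑ e ∈ univ.filter (fun e => (cond (σ e) (tgt e) (src e)) = v), c e =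
      ∑ e ∈ univ.filter (fun e => (cond (σ e) (src e) (tgt e)) = v), c e) := by
  constructor
  · rintro ⟨f, hao, hcons, hval⟩
    set σ : E → Bool := fun e => decide (f e ≠ 0) with hσdef
    have hfc : ∀ e, (if σ e = true then c e else 0) = f e := by
      intro e
      by_cases h : f e = 0
      · simp [hσdef, h]
      · rcases hao e with h0 | h1
        · exact absurd h0 h
        · simp [hσdef, h, h1]
          omega
    -- basic vanishing facts
    have hTs : ∀ b, capS tgt c σ b s = 0 := fun b =>
      Finset.sum_eq_zero fun e _ => by simp [hs_no_in e]
    have hSt : ∀ b, capS src c σ b t = 0 := fun b =>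
      Finset.sum_eq_zero fun e _ => by simp [ht_no_out e]
    -- value equation
    rw [← Nat.cast_sum, ← Nat.cast_sum, capS_flow src c σ f hfc s,
      capS_flow tgt c σ f hfc s] at hval
    have hCsF : capS src c σ true s = F := by
      have := hTs true; omega
    rw [capS_split src c σ s] at hFs
    rw [capS_split tgt c σ t] at hFt
    have hDsF : capS src c σ false s = F := by
      omega
    -- conservation in capS terms
    have hconsS : ∀ v, v ≠ s → v ≠ t → capS tgt c σ true v = capS src c σ true v := by
      intro v h1 h2
      have h := hcons v h1 h2
      rwa [capS_flow tgt c σ f hfc v, capS_flow src c σ f hfc v] at h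
    -- global sum argument to get the flow into t
    have hg : ∑ v, capS tgt c σ true v = ∑ v, capS src c σ true v := by
      rw [capS_glob, capS_glob]
    have hpair : univ.filter (fun v => v = s ∨ v = t) = {s, t} := by
      ext v; simp
    have hsplit : ∀ h : E → V, ∑ v, capS h c σ true v =
        capS h c σ true s + capS h c σ true t +
          ∑ v ∈ univ.filter (fun v => ¬(v = s ∨ v = t)), capS h c σ true v := by
      intro h
      rw [← Finset.sum_filter_add_sum_filter_not univ (fun v => v = s ∨ v = t),
        hpair, Finset.sum_pair hst]
    have hrest : ∑ v ∈ univ.filter (fun v => ¬(v = s ∨ v = t)), capS tgt c σ true v =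
        ∑ v ∈ univ.filter (fun v => ¬(v = s ∨ v = t)), capS src c σ true v := by
      refine Finset.sum_congr rfl fun v hv => ?_
      rw [Finset.mem_filter] at hv
      push_neg at hv
      exact hconsS v hv.2.1 hv.2.2
    rw [hsplit tgt, hsplit src] at hg
    have hAtF : capS tgt c σ true t = F := by
      have h1 := hTs true
      have h2 := hSt true
      omega
    refine ⟨σ, fun v => ?_⟩
    rw [capS_cond tgt src c σ v, capS_cond src tgt c σ v]
    by_cases hvs : v = s
    · subst hvs
      have h1 := hTs true
      have h2 := hTs false
      omega
    by_cases hvt : v = t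
    · subst hvt
      have h1 := hSt true
      have h2 := hSt false
      omega
    · have hb := hbal v hvs hvt
      rw [capS_split src c σ v, capS_split tgt c σ v] at hb
      have hc := hconsS v hvs hvt
      omega
  · rintro ⟨σ, hσ⟩
    have hσ' : ∀ v, capS tgt c σ true v + capS src c σ false v =
        capS src c σ true v + capS tgt c σ false v := by
      intro v
      have h := hσ v
      rwa [capS_cond tgt src c σ v, capS_cond src tgt c σ v] at h
    refine ⟨fun e => if σ e = true then c e else 0, fun e => ?_, fun v h1 h2 => ?_, ?_⟩
    · by_cases h : σ e = true <;> simp [h]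
    · have hfc : ∀ e, (if σ e = true then c e else 0) =
          (fun e => if σ e = true then c e else 0) e := fun e => rfl
      rw [capS_flow tgt c σ _ hfc v, capS_flow src c σ _ hfc v]
      have hb := hbal v h1 h2
      rw [capS_split src c σ v, capS_split tgt c σ v] at hb
      have h := hσ' v
      omega
    · have hfc : ∀ e, (if σ e = true then c e else 0) =
          (fun e => if σ e = true then c e else 0) e := fun e => rfl
      rw [← Nat.cast_sum, ← Nat.cast_sum, capS_flow src c σ _ hfc s,
        capS_flow tgt c σ _ hfc s]
      have hTs : ∀ b, capS tgt c σ b s = 0 := fun b =>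
        Finset.sum_eq_zero fun e _ => by simp [hs_no_in e]
      rw [capS_split src c σ s] at hFs
      have h := hσ' s
      have h1 := hTs true
      have h2 := hTs false
      omega
end

section
/- Let G be a directed multigraph with capacities, containing arcs uv and xy with c(uv) ≠ c(xy). Let G' be obtained from G by deleting arcs uv and xy, adding a new vertex d, and adding arcs ud, dv of capacity c(uv) and arcs xd, dy of capacity c(xy). Then G has an all-or-nothing st-flow of value F if and only if G' has an all-or-nothing st-flow of value F. -/
open Finset

/-- Existence of an all-or-nothing `st`-flow of value `F` in a directed
multigraph with arc set `E`, endpoint maps `src`, `tgt`, capacities `c`. -/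
def hasAoNFlow {V E : Type} [Fintype E] [DecidableEq V]
    (src tgt : E → V) (c : E → ℕ) (s t : V) (F : ℕ) : Prop :=
  ∃ f : E → ℕ,
    (∀ e, f e = 0 ∨ f e = c e) ∧
    (∀ v : V, v ≠ s → v ≠ t →
      ∑ e ∈ univ.filter (fun e => tgt e = v), f e =
      ∑ e ∈ univ.filter (fun e => src e = v), f e) ∧
    (∑ e ∈ univ.filter (fun e => src e = s), (f e : ℤ)) -
      (∑ e ∈ univ.filter (fun e => tgt e = s), (f e : ℤ)) = (F : ℤ)

lemma sum_transfer {V E : Type} [Fintype E] [DecidableEq V] [DecidableEq E]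
    (σ : E → V) (e₁ e₂ : E) (he : e₁ ≠ e₂)
    (f : E → ℕ) (m : Fin 4 → Option V) (fv : Fin 4 → ℕ)
    (hm : ∀ w : V, ∑ i : Fin 4, (if m i = some w then fv i else 0)
        = (if σ e₁ = w then f e₁ else 0) + (if σ e₂ = w then f e₂ else 0))
    (w : V) :
    ∑ e' ∈ univ.filter (fun e' : {e : E // e ≠ e₁ ∧ e ≠ e₂} ⊕ Fin 4 =>
        Sum.elim (fun e => some (σ e.1)) m e' = some w),
      Sum.elim (fun e => f e.1) fv e' =
    ∑ e ∈ univ.filter (fun e => σ e = w), f e := by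
  rw [sum_filter, sum_filter, Fintype.sum_sum_type]
  simp only [Sum.elim_inl, Sum.elim_inr, Option.some.injEq]
  erw [hm w]
  have hu : (univ : Finset E) = (univ.filter fun e => e ≠ e₁ ∧ e ≠ e₂) ∪ {e₁, e₂} := by
    ext e; by_cases h : e = e₁ <;> by_cases h' : e = e₂ <;> simp [h, h']
  have hd : Disjoint (univ.filter fun e : E => e ≠ e₁ ∧ e ≠ e₂) {e₁, e₂} := by
    simp only [Finset.disjoint_left, mem_filter, mem_insert, mem_singleton]
    rintro a ⟨_, h⟩ (rfl | rfl) <;> tauto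
  rw [show (∑ e : E, if σ e = w then f e else 0)
      = ∑ e ∈ (univ : Finset E), (if σ e = w then f e else 0) from rfl,
    hu, sum_union hd, Finset.sum_pair he,
    Finset.sum_subtype (p := fun e => e ≠ e₁ ∧ e ≠ e₂) (univ.filter fun e : E => e ≠ e₁ ∧ e ≠ e₂)
      (by simp) (fun e => if σ e = w then f e else 0)]

/-- Replacing two crossing arcs `uv`, `xy` of distinct
capacities by a new vertex `d` (here `(none : Option V)`) with arcs
`ud, dv` of capacity `c(uv)` and `xd, dy` of capacity `c(xy)` preserves
existence of an all-or-nothing `st`-flow of value `F`. -/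
theorem stmt1 {V E : Type} [Fintype V] [Fintype E] [DecidableEq V] [DecidableEq E]
    (src tgt : E → V) (c : E → ℕ) (s t : V) (hst : s ≠ t) (F : ℕ)
    (e₁ e₂ : E) (he : e₁ ≠ e₂) (hcap : c e₁ ≠ c e₂)
    (u v x y : V)
    (h1 : src e₁ = u) (h2 : tgt e₁ = v) (h3 : src e₂ = x) (h4 : tgt e₂ = y)
    (hs : s ≠ u ∧ s ≠ v ∧ s ≠ x ∧ s ≠ y)
    (ht : t ≠ u ∧ t ≠ v ∧ t ≠ x ∧ t ≠ y) :
    hasAoNFlow src tgt c s t F ↔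
    hasAoNFlow (V := Option V) (E := {e : E // e ≠ e₁ ∧ e ≠ e₂} ⊕ Fin 4)
      (Sum.elim (fun e => some (src e.1)) (fun i => ![some u, none, some x, none] i))
      (Sum.elim (fun e => some (tgt e.1)) (fun i => ![none, some v, none, some y] i))
      (Sum.elim (fun e => c e.1) (fun i => ![c e₁, c e₁, c e₂, c e₂] i))
      (some s) (some t) F := by
  subst h1 h2 h3 h4
  have hms : ∀ (f : E → ℕ) (w : V),
      ∑ i : Fin 4, (if ![some (src e₁), none, some (src e₂), none] i = some w
          then ![f e₁, f e₁, f e₂, f e₂] i else 0)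
        = (if src e₁ = w then f e₁ else 0) + (if src e₂ = w then f e₂ else 0) := by
    intro f w; simp [Fin.sum_univ_four]
  have hmt : ∀ (f : E → ℕ) (w : V),
      ∑ i : Fin 4, (if ![none, some (tgt e₁), none, some (tgt e₂)] i = some w
          then ![f e₁, f e₁, f e₂, f e₂] i else 0)
        = (if tgt e₁ = w then f e₁ else 0) + (if tgt e₂ = w then f e₂ else 0) := by
    intro f w; simp [Fin.sum_univ_four]
  constructor
  · rintro ⟨f, hao, hcons, hval⟩
    refine ⟨Sum.elim (fun e => f e.1) (fun i => ![f e₁, f e₁, f e₂, f e₂] i), ?_, ?_, ?_⟩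
    · rintro (e | i)
      · exact hao e.1
      · fin_cases i <;> simpa using (by first | exact hao e₁ | exact hao e₂)
    · rintro (_ | w) hw hw'
      · rw [sum_filter, sum_filter, Fintype.sum_sum_type, Fintype.sum_sum_type]
        simp [Fin.sum_univ_four]
      · rw [sum_transfer tgt e₁ e₂ he f _ _ (hmt f),
          sum_transfer src e₁ e₂ he f _ _ (hms f)]
        exact hcons w (by simpa using hw) (by simpa using hw')
    · rw [← Nat.cast_sum, ← Nat.cast_sum,
        sum_transfer tgt e₁ e₂ he f _ _ (hmt f),
        sum_transfer src e₁ e₂ he f _ _ (hms f),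
        Nat.cast_sum, Nat.cast_sum]
      exact hval
  · rintro ⟨g, hao, hcons, hval⟩
    have hnone : g (Sum.inr 0) + g (Sum.inr 2) = g (Sum.inr 1) + g (Sum.inr 3) := by
      have h := hcons none (by simp) (by simp)
      rw [sum_filter, sum_filter, Fintype.sum_sum_type, Fintype.sum_sum_type] at h
      simpa [Fin.sum_univ_four] using h
    have h01 : g (Sum.inr 0) = g (Sum.inr 1) ∧ g (Sum.inr 2) = g (Sum.inr 3) := by
      have a0 := hao (Sum.inr 0); have a1 := hao (Sum.inr 1)
      have a2 := hao (Sum.inr 2); have a3 := hao (Sum.inr 3)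
      simp only [Sum.elim_inr] at a0 a1 a2 a3
      norm_num at a0 a1 a2 a3
      have k2 : (![c e₁, c e₁, c e₂, c e₂] : Fin 4 → ℕ) 2 = c e₂ := rfl
      have k3 : (![c e₁, c e₁, c e₂, c e₂] : Fin 4 → ℕ) 3 = c e₂ := rfl
      rcases a0 with a0 | a0 <;> rcases a1 with a1 | a1 <;>
        rcases a2 with a2 | a2 <;> rcases a3 with a3 | a3 <;> omega
    obtain ⟨f, hf1, hf2, hf3⟩ : ∃ f : E → ℕ, f e₁ = g (Sum.inr 0) ∧ f e₂ = g (Sum.inr 2) ∧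
        ∀ (e : E) (hne1 : e ≠ e₁) (hne2 : e ≠ e₂), f e = g (Sum.inl ⟨e, hne1, hne2⟩) :=
      ⟨fun e => if hne1 : e = e₁ then g (Sum.inr 0) else if hne2 : e = e₂ then g (Sum.inr 2)
        else g (Sum.inl ⟨e, hne1, hne2⟩), by simp, by simp [he.symm],
        fun e hne1 hne2 => by simp [hne1, hne2]⟩
    have hg : g = Sum.elim (fun e => f e.1) (fun i => ![f e₁, f e₁, f e₂, f e₂] i) := by
      funext e'
      rcases e' with (⟨e, hne1, hne2⟩ | i)
      · simp [hf3 e hne1 hne2]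
      · fin_cases i <;> simp [hf1, hf2, ← h01.1, ← h01.2]
    refine ⟨f, ?_, ?_, ?_⟩
    · intro e
      by_cases hne1 : e = e₁
      · subst hne1
        have := hao (Sum.inr 0); rw [hf1]; simpa using this
      by_cases hne2 : e = e₂
      · subst hne2
        have := hao (Sum.inr 2); rw [hf2]; simpa using this
      · have := hao (Sum.inl ⟨e, hne1, hne2⟩); rw [hf3 e hne1 hne2]; simpa using this
    · intro w hw hw'
      have h := hcons (some w) (by simp [hw]) (by simp [hw'])
      rw [hg, sum_transfer tgt e₁ e₂ he f _ _ (hmt f),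
        sum_transfer src e₁ e₂ he f _ _ (hms f)] at h
      exact h
    · rw [hg, ← Nat.cast_sum, ← Nat.cast_sum,
        sum_transfer tgt e₁ e₂ he f _ _ (hmt f),
        sum_transfer src e₁ e₂ he f _ _ (hms f),
        Nat.cast_sum, Nat.cast_sum] at hval
      exact hval
end

section
/- Let G be a graph and H₁,…,H_t a family of graphs, each Hᵢ with two distinct special vertices sᵢ, tᵢ. Let F be obtained from G by replacing each edge {u,v} of G with a copy of one of the Hᵢ, identifying u with sᵢ and v with tᵢ. Then pw(F) ≤ pw(G) + max_{i ∈ [t]} pw(Hᵢ) + 1, where pw denotes pathwidth. -/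
open Finset

/-- A path decomposition of a simple graph: bags indexed by `Fin n`, every
vertex occurs, every edge is covered by some bag, and the occurrences of each
vertex form an interval. -/
def IsPathDecomp {V : Type} (G : SimpleGraph V) {n : ℕ} (χ : Fin n → Finset V) : Prop :=
  (∀ v : V, ∃ i, v ∈ χ i) ∧
  (∀ u v : V, G.Adj u v → ∃ i, u ∈ χ i ∧ v ∈ χ i) ∧
  (∀ (v : V) (i j k : Fin n), i ≤ j → j ≤ k → v ∈ χ i → v ∈ χ k → v ∈ χ j)

/-- The pathwidth of a simple graph: the least `w` admitting a path
decomposition with all bags of size at most `w + 1`. -/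
noncomputable def pathwidth {V : Type} (G : SimpleGraph V) : ℕ :=
  sInf {w : ℕ | ∃ (n : ℕ) (χ : Fin n → Finset V),
    IsPathDecomp G χ ∧ ∀ i, (χ i).card ≤ w + 1}

lemma pathwidth_le_of_decomp {V : Type} (G : SimpleGraph V)
    {L : Type} [Fintype L] [LinearOrder L] (χ : L → Finset V) (w : ℕ)
    (h1 : ∀ v, ∃ i, v ∈ χ i)
    (h2 : ∀ u v, G.Adj u v → ∃ i, u ∈ χ i ∧ v ∈ χ i)
    (h3 : ∀ (v : V) (i j k : L), i ≤ j → j ≤ k → v ∈ χ i → v ∈ χ k → v ∈ χ j)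
    (hcard : ∀ i, (χ i).card ≤ w + 1) :
    pathwidth G ≤ w := by
  apply Nat.sInf_le
  set φ := monoEquivOfFin L rfl
  refine ⟨Fintype.card L, fun i => χ (φ i), ⟨?_, ?_, ?_⟩, fun i => hcard _⟩
  · intro v; obtain ⟨i, hi⟩ := h1 v; exact ⟨φ.symm i, by simpa using hi⟩
  · intro u v huv; obtain ⟨i, hi⟩ := h2 u v huv; exact ⟨φ.symm i, by simpa using hi⟩
  · intro v i j k hij hjk hi hk
    exact h3 v _ _ _ (φ.monotone hij) (φ.monotone hjk) hi hk

lemma exists_decomp {V : Type} [Fintype V] (G : SimpleGraph V) :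
    ∃ (n : ℕ) (χ : Fin n → Finset V), IsPathDecomp G χ ∧
      ∀ i, (χ i).card ≤ pathwidth G + 1 := by
  have hne : {w : ℕ | ∃ (n : ℕ) (χ : Fin n → Finset V),
      IsPathDecomp G χ ∧ ∀ i, (χ i).card ≤ w + 1}.Nonempty := by
    refine ⟨Fintype.card V, 1, fun _ => Finset.univ, ⟨fun v => ⟨0, mem_univ v⟩,
      fun u v _ => ⟨0, mem_univ u, mem_univ v⟩,
      fun v i j k _ _ _ _ => mem_univ v⟩, fun _ => by simp [card_univ]⟩
  exact Nat.sInf_mem hne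

lemma lex_sum_cases {α β : Type*} (q : Lex (α ⊕ β)) :
    (∃ a, q = toLex (Sum.inl a)) ∨ ∃ b, q = toLex (Sum.inr b) := by
  rcases hw : ofLex q with a | b
  · exact Or.inl ⟨a, by rw [← hw]; rfl⟩
  · exact Or.inr ⟨b, by rw [← hw]; rfl⟩

lemma lex_prod_dest {α β : Type*} (q : Lex (α × β)) : ∃ x y, q = toLex (x, y) :=
  ⟨(ofLex q).1, (ofLex q).2, rfl⟩

lemma sum_lex_between {α β : Type*} [Preorder α] [Preorder β] {a c : α} {q : α ⊕ₗ β}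
    (h1 : toLex (Sum.inl a) ≤ q) (h2 : q ≤ toLex (Sum.inl c)) :
    ∃ b, q = toLex (Sum.inl b) ∧ a ≤ b ∧ b ≤ c := by
  rcases lex_sum_cases q with ⟨b, rfl⟩ | ⟨z, rfl⟩
  · exact ⟨b, rfl, Sum.Lex.inl_le_inl_iff.mp h1, Sum.Lex.inl_le_inl_iff.mp h2⟩
  · exact absurd h2 Sum.Lex.not_inr_le_inl

lemma sum_lex_between_r {α β : Type*} [Preorder α] [Preorder β] {a c : β} {q : α ⊕ₗ β}
    (h1 : toLex (Sum.inr a) ≤ q) (h2 : q ≤ toLex (Sum.inr c)) :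
    ∃ b, q = toLex (Sum.inr b) ∧ a ≤ b ∧ b ≤ c := by
  rcases lex_sum_cases q with ⟨b, rfl⟩ | ⟨z, rfl⟩
  · exact absurd h1 Sum.Lex.not_inr_le_inl
  · exact ⟨z, rfl, Sum.Lex.inr_le_inr_iff.mp h1, Sum.Lex.inr_le_inr_iff.mp h2⟩

lemma prod_lex_fst_le {α β : Type*} [PartialOrder α] [Preorder β] {a b : α × β}
    (h : toLex a ≤ toLex b) : a.1 ≤ b.1 := by
  rcases Prod.Lex.le_iff.mp h with h | ⟨h, -⟩
  · exact h.le
  · exact h.le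

lemma prod_lex_between {α β : Type*} [PartialOrder α] [Preorder β] {i : α} {x z : β}
    {q : α ×ₗ β} (h1 : toLex (i, x) ≤ q) (h2 : q ≤ toLex (i, z)) :
    ∃ y, q = toLex (i, y) ∧ x ≤ y ∧ y ≤ z := by
  obtain ⟨a, y, rfl⟩ := lex_prod_dest q
  have ha1 : i ≤ a := prod_lex_fst_le h1
  have ha2 : a ≤ i := prod_lex_fst_le h2
  obtain rfl : a = i := le_antisymm ha2 ha1
  rcases Prod.Lex.le_iff.mp h1 with h | ⟨-, h⟩
  · exact absurd h (lt_irrefl _)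
  rcases Prod.Lex.le_iff.mp h2 with h' | ⟨-, h'⟩
  · exact absurd h' (lt_irrefl _)
  exact ⟨y, rfl, h, h'⟩

/-- Let `G` be a graph on `V` whose edges are exactly the
pairs `{fs e, sn e}` for `e : E`, and let each edge `e` be replaced by a copy
of the gadget `H (idx e)` (a graph on `W` with distinct poles `s i`, `t i`),
identifying `s (idx e)` with `fs e` and `t (idx e)` with `sn e`; internal
gadget vertices become the vertices `Sum.inr (e, w)`. Then the pathwidth of
the resulting graph `F` is at most `pw(G) + maxᵢ pw(Hᵢ) + 1`. -/
theorem stmt11 {V W ι E : Type} [Fintype V] [Fintype W] [Fintype ι] [Fintype E]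
    [DecidableEq V] [DecidableEq W]
    (G : SimpleGraph V) (H : ι → SimpleGraph W) (s t : ι → W)
    (hst : ∀ i, s i ≠ t i)
    (fs sn : E → V) (idx : E → ι)
    (hG : ∀ a b : V, G.Adj a b ↔ ∃ e : E,
      (fs e = a ∧ sn e = b) ∨ (fs e = b ∧ sn e = a)) :
    pathwidth (SimpleGraph.fromRel (fun p q : V ⊕ E × W =>
      ∃ (e : E) (a b : W), (H (idx e)).Adj a b ∧
        (if a = s (idx e) then Sum.inl (fs e)
          else if a = t (idx e) then Sum.inl (sn e) else Sum.inr (e, a)) = p ∧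
        (if b = s (idx e) then Sum.inl (fs e)
          else if b = t (idx e) then Sum.inl (sn e) else Sum.inr (e, b)) = q)) ≤
    pathwidth G + (univ.sup fun i : ι => pathwidth (H i)) + 1 := by
  classical
  obtain ⟨n, χ, ⟨hχ1, hχ2, hχ3⟩, hχc⟩ := exists_decomp G
  choose m ψ hψd hψc using fun i => exists_decomp (H i)
  set N : ℕ := (univ.sup m) + 1 with hNdef
  have hmN : ∀ i, m i < N := fun i => Nat.lt_succ_of_le (Finset.le_sup (mem_univ i))
  set Ψ : ι → Fin N → Finset W := fun i j =>
    if h : m i = 0 then ∅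
    else ψ i ⟨min j (m i - 1), by omega⟩ with hΨdef
  have hΨeq : ∀ (i : ι) (j : Fin (m i)), Ψ i ⟨j.1, j.2.trans (hmN i)⟩ = ψ i j := by
    intro i j
    have h0 : m i ≠ 0 := by have := j.2; omega
    simp only [hΨdef, dif_neg h0]
    congr 1
    have := j.2
    exact Fin.ext (by simp; omega)
  have hΨc : ∀ i j, (Ψ i j).card ≤ pathwidth (H i) + 1 := by
    intro i j
    simp only [hΨdef]
    split
    · simp
    · exact hψc i _
  have hΨ3 : ∀ (i : ι) (w : W) (a b c : Fin N), a ≤ b → b ≤ c →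
      w ∈ Ψ i a → w ∈ Ψ i c → w ∈ Ψ i b := by
    intro i w a b c hab hbc ha hc
    by_cases h0 : m i = 0
    · simp [hΨdef, h0] at ha
    · simp only [hΨdef, dif_neg h0] at ha hc ⊢
      have hab' := Fin.le_def.mp hab
      have hbc' := Fin.le_def.mp hbc
      exact (hψd i).2.2 w _ _ _ (Fin.mk_le_mk.mpr (by omega)) (Fin.mk_le_mk.mpr (by omega)) ha hc
  have hΨmem1 : ∀ (i : ι) (w : W), ∃ j : Fin N, w ∈ Ψ i j := by
    intro i w
    obtain ⟨j, hj⟩ := (hψd i).1 w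
    exact ⟨⟨j.1, j.2.trans (hmN i)⟩, by rw [hΨeq]; exact hj⟩
  have hΨmem2 : ∀ (i : ι) (a b : W), (H i).Adj a b → ∃ j : Fin N, a ∈ Ψ i j ∧ b ∈ Ψ i j := by
    intro i a b hab
    obtain ⟨j, hja, hjb⟩ := (hψd i).2.1 a b hab
    exact ⟨⟨j.1, j.2.trans (hmN i)⟩, by rw [hΨeq]; exact hja, by rw [hΨeq]; exact hjb⟩
  have hadj : ∀ e, G.Adj (fs e) (sn e) := fun e => (hG _ _).2 ⟨e, Or.inl ⟨rfl, rfl⟩⟩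
  choose ie hie1 hie2 using fun e => hχ2 _ _ (hadj e)
  set f : E → W → V ⊕ E × W := fun e a =>
    if a = s (idx e) then Sum.inl (fs e)
    else if a = t (idx e) then Sum.inl (sn e) else Sum.inr (e, a) with hfdef
  have hf_inl : ∀ (e : E) (a : W) (v : V), f e a = Sum.inl v → v ∈ χ (ie e) := by
    intro e a v h
    simp only [hfdef] at h
    split_ifs at h with h1 h2
    · exact (Sum.inl.inj h) ▸ hie1 e
    · exact (Sum.inl.inj h) ▸ hie2 e
  have hf_inr : ∀ (e : E) (a : W) (e' : E) (w : W), f e a = Sum.inr (e', w) →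
      e' = e ∧ a = w ∧ w ≠ s (idx e) ∧ w ≠ t (idx e) := by
    intro e a e' w h
    simp only [hfdef] at h
    split_ifs at h with h1 h2
    obtain ⟨rfl, rfl⟩ := Prod.mk.inj (Sum.inr.inj h)
    exact ⟨rfl, rfl, h1, h2⟩
  have hf_int : ∀ (e : E) (w : W), w ≠ s (idx e) → w ≠ t (idx e) → f e w = Sum.inr (e, w) := by
    intro e w h1 h2
    simp only [hfdef, if_neg h1, if_neg h2]
  letI : LinearOrder E := LinearOrder.lift' (Fintype.equivFin E) (Fintype.equivFin E).injective
  letI : LinearOrder (E × W) :=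
    LinearOrder.lift' (Fintype.equivFin (E × W)) (Fintype.equivFin (E × W)).injective
  set gb : Fin n → Finset (V ⊕ E × W) := fun i => (χ i).image Sum.inl with hgb
  set B : (Fin n ×ₗ (PUnit.{1} ⊕ₗ (E ×ₗ Fin N))) ⊕ₗ (E × W) → Finset (V ⊕ E × W) := fun p =>
    Sum.elim
      (fun q : Fin n ×ₗ (PUnit.{1} ⊕ₗ (E ×ₗ Fin N)) =>
        Sum.elim (fun _ => gb (ofLex q).1)
          (fun z : E ×ₗ Fin N =>
            if ie (ofLex z).1 = (ofLex q).1
            then gb (ofLex q).1 ∪ (Ψ (idx (ofLex z).1) (ofLex z).2).image (f (ofLex z).1)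
            else gb (ofLex q).1)
          (ofLex (ofLex q).2))
      (fun z : E × W => if z.2 = s (idx z.1) ∨ z.2 = t (idx z.1) then {Sum.inr z} else ∅)
      (ofLex p) with hB
  -- membership characterizations
  have hBinl : ∀ (v : V) (p : (Fin n ×ₗ (PUnit.{1} ⊕ₗ (E ×ₗ Fin N))) ⊕ₗ (E × W)),
      Sum.inl v ∈ B p ↔ ∃ q, p = toLex (Sum.inl q) ∧ v ∈ χ (ofLex q).1 := by
    intro v p
    constructor
    · intro h
      rcases lex_sum_cases p with ⟨q, rfl⟩ | ⟨z, rfl⟩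
      · obtain ⟨i, y, rfl⟩ := lex_prod_dest q
        refine ⟨toLex (i, y), rfl, ?_⟩
        simp only [ofLex_toLex]
        rcases lex_sum_cases y with ⟨u, rfl⟩ | ⟨z, rfl⟩
        · simp only [hB, ofLex_toLex, Sum.elim_inl, hgb] at h
          simpa using h
        · obtain ⟨e', j, rfl⟩ := lex_prod_dest z
          simp only [hB, ofLex_toLex, Sum.elim_inl, Sum.elim_inr] at h
          change Sum.inl v ∈ (if ie e' = i then _ else _) at h
          split_ifs at h with hcond
          · rcases mem_union.mp h with h | h
            · simpa [hgb] using h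
            · obtain ⟨a, -, ha⟩ := mem_image.mp h
              exact hcond ▸ hf_inl _ _ _ ha
          · simpa [hgb] using h
      · simp only [hB, ofLex_toLex, Sum.elim_inr] at h
        split_ifs at h with hcond
        · simp at h
        · simp at h
    · rintro ⟨q, rfl, hv⟩
      obtain ⟨i, y, rfl⟩ := lex_prod_dest q
      simp only [ofLex_toLex] at hv
      rcases lex_sum_cases y with ⟨u, rfl⟩ | ⟨z, rfl⟩
      · simp only [hB, ofLex_toLex, Sum.elim_inl]
        exact mem_image_of_mem _ hv
      · obtain ⟨e', j, rfl⟩ := lex_prod_dest z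
        simp only [hB, ofLex_toLex, Sum.elim_inl, Sum.elim_inr]
        change Sum.inl v ∈ (if ie e' = i then _ else _)
        split_ifs
        · exact mem_union_left _ (mem_image_of_mem _ hv)
        · exact mem_image_of_mem _ hv
  have hBjunk : ∀ (e : E) (w : W), (w = s (idx e) ∨ w = t (idx e)) →
      ∀ p, Sum.inr (e, w) ∈ B p ↔ p = toLex (Sum.inr (e, w)) := by
    intro e w hw p
    constructor
    · intro h
      rcases lex_sum_cases p with ⟨q, rfl⟩ | ⟨z, rfl⟩
      · obtain ⟨i, y, rfl⟩ := lex_prod_dest q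
        rcases lex_sum_cases y with ⟨u, rfl⟩ | ⟨z, rfl⟩
        · simp only [hB, ofLex_toLex, Sum.elim_inl, hgb] at h
          simp at h
        · obtain ⟨e', j, rfl⟩ := lex_prod_dest z
          simp only [hB, ofLex_toLex, Sum.elim_inl, Sum.elim_inr] at h
          change Sum.inr (e, w) ∈ (if ie e' = i then _ else _) at h
          split_ifs at h with hcond
          · rcases mem_union.mp h with h | h
            · simp [hgb] at h
            · obtain ⟨a, -, ha⟩ := mem_image.mp h
              obtain ⟨rfl, rfl, hs', ht'⟩ := hf_inr _ _ _ _ ha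
              tauto
          · simp [hgb] at h
      · simp only [hB, ofLex_toLex, Sum.elim_inr] at h
        split_ifs at h with hcond
        · simp only [mem_singleton] at h
          obtain rfl : (e, w) = z := Sum.inr.inj h
          rfl
        · simp at h
    · rintro rfl
      simp [hB, hw]
  have hBint : ∀ (e : E) (w : W), w ≠ s (idx e) → w ≠ t (idx e) →
      ∀ p, Sum.inr (e, w) ∈ B p ↔ ∃ j : Fin N,
        p = toLex (Sum.inl (toLex (ie e, toLex (Sum.inr (toLex (e, j)))))) ∧
        w ∈ Ψ (idx e) j := by
    intro e w hs' ht' p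
    constructor
    · intro h
      rcases lex_sum_cases p with ⟨q, rfl⟩ | ⟨z, rfl⟩
      · obtain ⟨i, y, rfl⟩ := lex_prod_dest q
        rcases lex_sum_cases y with ⟨u, rfl⟩ | ⟨z, rfl⟩
        · simp only [hB, ofLex_toLex, Sum.elim_inl, hgb] at h
          simp at h
        · obtain ⟨e', j, rfl⟩ := lex_prod_dest z
          simp only [hB, ofLex_toLex, Sum.elim_inl, Sum.elim_inr] at h
          change Sum.inr (e, w) ∈ (if ie e' = i then _ else _) at h
          split_ifs at h with hcond
          · rcases mem_union.mp h with h | h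
            · simp [hgb] at h
            · obtain ⟨a, haΨ, ha⟩ := mem_image.mp h
              obtain ⟨rfl, rfl, -, -⟩ := hf_inr _ _ _ _ ha
              subst hcond
              exact ⟨j, rfl, haΨ⟩
          · simp [hgb] at h
      · simp only [hB, ofLex_toLex, Sum.elim_inr] at h
        split_ifs at h with hcond
        · simp only [mem_singleton] at h
          obtain rfl : (e, w) = z := Sum.inr.inj h
          tauto
        · simp at h
    · rintro ⟨j, rfl, hΨj⟩
      simp only [hB, ofLex_toLex, Sum.elim_inl, Sum.elim_inr, if_pos rfl]
      exact mem_union_right _ (mem_image.mpr ⟨w, hΨj, hf_int e w hs' ht'⟩)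
  refine pathwidth_le_of_decomp _ B _ ?_ ?_ ?_ ?_
  · -- coverage
    rintro (v | ⟨e, w⟩)
    · obtain ⟨i, hi⟩ := hχ1 v
      exact ⟨toLex (Sum.inl (toLex (i, toLex (Sum.inl PUnit.unit)))),
        (hBinl v _).mpr ⟨toLex (i, toLex (Sum.inl PUnit.unit)), rfl, by simpa using hi⟩⟩
    · by_cases hw : w = s (idx e) ∨ w = t (idx e)
      · exact ⟨toLex (Sum.inr (e, w)), (hBjunk e w hw _).mpr rfl⟩
      · push_neg at hw
        obtain ⟨j, hj⟩ := hΨmem1 (idx e) w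
        exact ⟨_, (hBint e w hw.1 hw.2 _).mpr ⟨j, rfl, hj⟩⟩
  · -- edges
    intro p q hpq
    rw [SimpleGraph.fromRel_adj] at hpq
    obtain ⟨-, h | h⟩ := hpq
    · obtain ⟨e, a, b, hab, ha, hb⟩ := h
      obtain ⟨j, hja, hjb⟩ := hΨmem2 (idx e) a b hab
      have hmem : ∀ (c : W) (x : V ⊕ E × W), c ∈ Ψ (idx e) j → f e c = x →
          x ∈ B (toLex (Sum.inl (toLex (ie e, toLex (Sum.inr (toLex (e, j))))))) := by
        intro c x hc hx
        simp only [hB, ofLex_toLex, Sum.elim_inl, Sum.elim_inr, if_pos rfl]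
        exact mem_union_right _ (mem_image.mpr ⟨c, hc, hx⟩)
      exact ⟨_, hmem a p hja (by simp only [hfdef]; exact ha),
        hmem b q hjb (by simp only [hfdef]; exact hb)⟩
    · obtain ⟨e, a, b, hab, ha, hb⟩ := h
      obtain ⟨j, hja, hjb⟩ := hΨmem2 (idx e) a b hab
      have hmem : ∀ (c : W) (x : V ⊕ E × W), c ∈ Ψ (idx e) j → f e c = x →
          x ∈ B (toLex (Sum.inl (toLex (ie e, toLex (Sum.inr (toLex (e, j))))))) := by
        intro c x hc hx
        simp only [hB, ofLex_toLex, Sum.elim_inl, Sum.elim_inr, if_pos rfl]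
        exact mem_union_right _ (mem_image.mpr ⟨c, hc, hx⟩)
      exact ⟨_, hmem b p hjb (by simp only [hfdef]; exact hb),
        hmem a q hja (by simp only [hfdef]; exact ha)⟩
  · -- interval property
    rintro (v | ⟨e, w⟩) p q r hpq hqr hp hr
    · rw [hBinl] at hp hr ⊢
      obtain ⟨qp, rfl, hvp⟩ := hp
      obtain ⟨qr, rfl, hvr⟩ := hr
      obtain ⟨qq, rfl, h1, h2⟩ := sum_lex_between hpq hqr
      obtain ⟨i1, y1, rfl⟩ := lex_prod_dest qp
      obtain ⟨i2, y2, rfl⟩ := lex_prod_dest qq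
      obtain ⟨i3, y3, rfl⟩ := lex_prod_dest qr
      simp only [ofLex_toLex] at hvp hvr ⊢
      exact ⟨toLex (i2, y2), rfl, hχ3 v i1 i2 i3 (prod_lex_fst_le h1) (prod_lex_fst_le h2) hvp hvr⟩
    · by_cases hw : w = s (idx e) ∨ w = t (idx e)
      · rw [hBjunk e w hw] at hp hr ⊢
        subst hp
        subst hr
        exact le_antisymm hqr hpq
      · push_neg at hw
        rw [hBint e w hw.1 hw.2] at hp hr ⊢
        obtain ⟨j1, rfl, hw1⟩ := hp
        obtain ⟨j3, rfl, hw3⟩ := hr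
        obtain ⟨qq, rfl, h1, h2⟩ := sum_lex_between hpq hqr
        obtain ⟨y, rfl, h1', h2'⟩ := prod_lex_between h1 h2
        obtain ⟨z, rfl, h1'', h2''⟩ := sum_lex_between_r h1' h2'
        obtain ⟨j2, rfl, hj1, hj2⟩ := prod_lex_between h1'' h2''
        exact ⟨j2, rfl, hΨ3 (idx e) w j1 j2 j3 hj1 hj2 hw1 hw3⟩
  · -- cardinality
    intro p
    have hgbc : ∀ i, (gb i).card ≤ pathwidth G + 1 := fun i => card_image_le.trans (hχc i)
    have hsup : ∀ i : ι, pathwidth (H i) ≤ univ.sup fun i : ι => pathwidth (H i) :=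
      fun i => Finset.le_sup (f := fun i : ι => pathwidth (H i)) (mem_univ i)
    rcases lex_sum_cases p with ⟨q, rfl⟩ | ⟨z, rfl⟩
    · obtain ⟨i, y, rfl⟩ := lex_prod_dest q
      rcases lex_sum_cases y with ⟨u, rfl⟩ | ⟨z, rfl⟩
      · simp only [hB, ofLex_toLex, Sum.elim_inl]
        have := hgbc i
        omega
      · obtain ⟨e', j, rfl⟩ := lex_prod_dest z
        simp only [hB, ofLex_toLex, Sum.elim_inl, Sum.elim_inr]
        change #(if ie e' = i then _ else _) ≤ _
        split_ifs
        · refine card_union_le _ _ |>.trans ?_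
          have h1 := hgbc i
          have h2 : ((Ψ (idx e') j).image (f e')).card ≤
              (univ.sup fun i : ι => pathwidth (H i)) + 1 :=
            card_image_le.trans ((hΨc (idx e') j).trans (by have := hsup (idx e'); omega))
          omega
        · have := hgbc i
          omega
    · simp only [hB, ofLex_toLex, Sum.elim_inr]
      split_ifs
      · simp
      · simp
end

section
/- Subdividing every edge of a graph increases its pathwidth by at most one: if G' is obtained from G by replacing each edge {u,v} by a path u–w–v through a new vertex w, then pw(G') ≤ pw(G) + 1. -/
open Finset

/-- Subdividing every edge of a graph `G` (replacing each
edge `e = {u,v}` by a path `u – wₑ – v` through a new vertex `wₑ`, here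
`Sum.inr e` for `e : G.edgeSet`) increases the pathwidth by at most one. -/
theorem stmt12 {V : Type} [Fintype V] [DecidableEq V]
    (G : SimpleGraph V) [DecidableRel G.Adj] :
    pathwidth (SimpleGraph.fromRel (fun p q : V ⊕ G.edgeSet =>
      ∃ (u : V) (e : G.edgeSet), p = Sum.inl u ∧ q = Sum.inr e ∧ u ∈ (e : Sym2 V))) ≤
    pathwidth G + 1 := by
  classical
  have hmem : pathwidth G ∈ {w : ℕ | ∃ (n : ℕ) (χ : Fin n → Finset V),
      IsPathDecomp G χ ∧ ∀ i, (χ i).card ≤ w + 1} := by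
    apply Nat.sInf_mem
    refine ⟨Fintype.card V, 1, fun _ => Finset.univ, ⟨fun v => ⟨0, Finset.mem_univ v⟩,
      fun u v _ => ⟨0, Finset.mem_univ u, Finset.mem_univ v⟩,
      fun _ _ _ _ _ _ _ _ => Finset.mem_univ _⟩, fun _ => by simp⟩
  obtain ⟨n, χ, hdec, hcard⟩ := hmem
  set k := Fintype.card G.edgeSet with hk
  set ε : G.edgeSet ≃ Fin k := Fintype.equivFin G.edgeSet with hε
  have hI : ∀ e : G.edgeSet, ∃ i : Fin n, ∀ u : V, u ∈ (e : Sym2 V) → u ∈ χ i := by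
    rintro ⟨s, hs⟩
    induction s using Sym2.ind with
    | _ u v =>
      rw [SimpleGraph.mem_edgeSet] at hs
      obtain ⟨i, hu, hv⟩ := hdec.2.1 u v hs
      refine ⟨i, fun x hx => ?_⟩
      rcases Sym2.mem_iff.1 hx with h | h <;> subst h <;> assumption
  choose I hIspec using hI
  have hk1 : 0 < k + 1 := Nat.succ_pos k
  -- index arithmetic helpers
  have hlt : ∀ (i : Fin n) (t : ℕ), t < k + 1 → (k+1) * (i : ℕ) + t < n * (k+1) := by
    intro i t ht
    have h1 : (k+1) * (i : ℕ) + t < (k+1) * ((i : ℕ) + 1) := by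
      have : (k+1) * ((i : ℕ) + 1) = (k+1) * (i : ℕ) + (k+1) := by ring
      omega
    have h2 : (k+1) * ((i : ℕ) + 1) ≤ (k+1) * n := Nat.mul_le_mul_left _ i.2
    have h3 : (k+1) * n = n * (k+1) := Nat.mul_comm _ _
    omega
  have hdivlt : ∀ j : Fin (n * (k+1)), (j : ℕ) / (k+1) < n := by
    intro j
    exact (Nat.div_lt_iff_lt_mul hk1).2 j.2
  have hdiveq : ∀ (i : Fin n) (t : ℕ), t < k + 1 → ((k+1) * (i : ℕ) + t) / (k+1) = (i : ℕ) := by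
    intro i t ht
    rw [Nat.mul_add_div hk1, Nat.div_eq_of_lt ht]
    omega
  have hmodeq : ∀ (i : Fin n) (t : ℕ), t < k + 1 → ((k+1) * (i : ℕ) + t) % (k+1) = t := by
    intro i t ht
    rw [Nat.mul_add_mod, Nat.mod_eq_of_lt ht]
  apply Nat.sInf_le
  refine ⟨n * (k+1), fun j =>
    ((χ ⟨(j : ℕ) / (k+1), hdivlt j⟩).image Sum.inl) ∪
    ((Finset.univ.filter (fun e : G.edgeSet =>
        (j : ℕ) % (k+1) = (ε e : ℕ) + 1 ∧ ((I e : ℕ)) = (j : ℕ) / (k+1))).image Sum.inr),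
    ⟨?_, ?_, ?_⟩, ?_⟩
  · -- vertex coverage
    rintro (v | e)
    · obtain ⟨i, hi⟩ := hdec.1 v
      refine ⟨⟨(k+1) * (i : ℕ) + 0, hlt i 0 hk1⟩,
        Finset.mem_union_left _ (Finset.mem_image_of_mem _ ?_)⟩
      have hd : (((k+1) * (i : ℕ) + 0) / (k+1)) = (i : ℕ) := hdiveq i 0 hk1
      convert hi using 2
      exact Fin.ext hd
    · have htlt : (ε e : ℕ) + 1 < k + 1 := by have := (ε e).2; omega
      refine ⟨⟨(k+1) * (I e : ℕ) + ((ε e : ℕ) + 1), hlt (I e) _ htlt⟩, ?_⟩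
      apply Finset.mem_union_right
      apply Finset.mem_image_of_mem
      rw [Finset.mem_filter]
      refine ⟨Finset.mem_univ _, ?_, ?_⟩
      · exact hmodeq (I e) _ htlt
      · exact (hdiveq (I e) _ htlt).symm
  · -- edge coverage
    intro p q hpq
    rw [SimpleGraph.fromRel_adj] at hpq
    obtain ⟨-, h | h⟩ := hpq
    all_goals obtain ⟨u, e, hp, hq, hue⟩ := h
    all_goals {
      have htlt : (ε e : ℕ) + 1 < k + 1 := by have := (ε e).2; omega
      refine ⟨⟨(k+1) * (I e : ℕ) + ((ε e : ℕ) + 1), hlt (I e) _ htlt⟩, ?_, ?_⟩ <;>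
        first
        | (subst hp
           refine Finset.mem_union_left _ (Finset.mem_image_of_mem _ ?_)
           have hd := hdiveq (I e) ((ε e : ℕ) + 1) htlt
           convert hIspec e u hue using 2
           exact Fin.ext hd)
        | (subst hq
           refine Finset.mem_union_right _ (Finset.mem_image_of_mem _ ?_)
           rw [Finset.mem_filter]
           exact ⟨Finset.mem_univ _, hmodeq (I e) _ htlt, (hdiveq (I e) _ htlt).symm⟩)
    }
  · -- interval property
    rintro (v | e) i j l hij hjl hxi hxl
    · simp only [Finset.mem_union, Finset.mem_image, Finset.mem_filter] at hxi hxl ⊢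
      rcases hxi with ⟨a, ha, hav⟩ | ⟨a, ha, hav⟩
      swap
      · exact absurd hav (by simp)
      rcases hxl with ⟨b, hb, hbv⟩ | ⟨b, hb, hbv⟩
      swap
      · exact absurd hbv (by simp)
      rw [Sum.inl.injEq] at hav hbv
      left
      refine ⟨a, ?_, by rw [hav]⟩
      have hba : b = a := hbv.trans hav.symm
      rw [hba] at hb
      have h1 : (i : ℕ) / (k+1) ≤ (j : ℕ) / (k+1) := Nat.div_le_div_right hij
      have h2 : (j : ℕ) / (k+1) ≤ (l : ℕ) / (k+1) := Nat.div_le_div_right hjl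
      exact hdec.2.2 a ⟨(i : ℕ)/(k+1), hdivlt i⟩ ⟨(j : ℕ)/(k+1), hdivlt j⟩
        ⟨(l : ℕ)/(k+1), hdivlt l⟩ h1 h2 ha hb
    · simp only [Finset.mem_union, Finset.mem_image, Finset.mem_filter] at hxi hxl
      rcases hxi with ⟨a, ha, hav⟩ | ⟨a, ⟨-, ha1, ha2⟩, hav⟩
      · exact absurd hav (by simp)
      rcases hxl with ⟨b, hb, hbv⟩ | ⟨b, ⟨-, hb1, hb2⟩, hbv⟩
      · exact absurd hbv (by simp)
      rw [Sum.inr.injEq] at hav hbv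
      rw [hav] at ha1 ha2
      rw [hbv] at hb1 hb2
      have hi' : (k+1) * ((i : ℕ)/(k+1)) + (i : ℕ) % (k+1) = (i : ℕ) :=
        Nat.div_add_mod _ _
      have hl' : (k+1) * ((l : ℕ)/(k+1)) + (l : ℕ) % (k+1) = (l : ℕ) :=
        Nat.div_add_mod _ _
      have hil : (i : ℕ) = (l : ℕ) := by
        rw [← hi', ← hl', ha1, ← ha2, hb1, ← hb2]
      have hji : j = i := by
        have h1 : (i : ℕ) ≤ (j : ℕ) := hij
        have h2 : (j : ℕ) ≤ (l : ℕ) := hjl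
        exact Fin.ext (by omega)
      rw [hji]
      simp only [Finset.mem_union, Finset.mem_image, Finset.mem_filter]
      right
      exact ⟨e, ⟨Finset.mem_univ _, ha1, ha2⟩, rfl⟩
  · -- card bound
    intro j
    have h1 : ((χ ⟨(j : ℕ) / (k+1), hdivlt j⟩).image (Sum.inl : V → V ⊕ G.edgeSet)).card ≤ pathwidth G + 1 :=
      le_trans (Finset.card_image_le (s := χ ⟨(j : ℕ) / (k+1), hdivlt j⟩) (f := (Sum.inl : V → V ⊕ G.edgeSet)))
        (hcard _)
    have h2 : ((Finset.univ.filter (fun e : G.edgeSet =>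
        (j : ℕ) % (k+1) = (ε e : ℕ) + 1 ∧ ((I e : ℕ)) = (j : ℕ) / (k+1))).image (Sum.inr : G.edgeSet → V ⊕ G.edgeSet)).card ≤ 1 := by
      refine le_trans (Finset.card_image_le (s := Finset.univ.filter (fun e : G.edgeSet =>
        (j : ℕ) % (k+1) = (ε e : ℕ) + 1 ∧ ((I e : ℕ)) = (j : ℕ) / (k+1))) (f := (Sum.inr : G.edgeSet → V ⊕ G.edgeSet))) ?_
      refine Finset.card_le_one.2 (fun a ha b hb => ?_)
      rw [Finset.mem_filter] at ha hb
      have : ε a = ε b := Fin.ext (by omega)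
      exact ε.injective this
    have h3 := Finset.card_union_le (α := V ⊕ G.edgeSet)
      ((χ ⟨(j : ℕ) / (k+1), hdivlt j⟩).image (Sum.inl : V → V ⊕ G.edgeSet))
      ((Finset.univ.filter (fun e : G.edgeSet =>
        (j : ℕ) % (k+1) = (ε e : ℕ) + 1 ∧ ((I e : ℕ)) = (j : ℕ) / (k+1))).image (Sum.inr : G.edgeSet → V ⊕ G.edgeSet))
    exact le_trans h3 (by omega)
end
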